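/- Let g₁₂(t₁,…,t₇) = t₁·(t₃ − t₆²) − t₇². The set of singular points of the hypersurface {g₁₂ = 0} in ℂ⁷, i.e. points t ∈ ℂ⁷ with g₁₂(t) = 0 and ∇g₁₂(t) = 0, is exactly the set {t ∈ ℂ⁷ : t₁ = 0, t₇ = 0, t₃ = t₆²}. -/
import Mathlib


open MvPolynomial

/-- g₁₂(t₁,…,t₇) = t₁(t₃ − t₆²) − t₇²,
with variables t₁,…,t₇ indexed by `Fin 7`. -/
noncomputable def g12Poly : MvPolynomial (Fin 7) ℂ :=
  X 0 * (X 2 - X 5 ^ 2) - X 6 ^ 2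

/-- The singular locus of the hypersurface {g₁₂ = 0} ⊂ ℂ⁷ is exactly
{t₁ = 0, t₇ = 0, t₃ = t₆²}. -/
theorem singular_locus_g12 (t : Fin 7 → ℂ) :
    (eval t g12Poly = 0 ∧ ∀ i : Fin 7, eval t (pderiv i g12Poly) = 0) ↔
    (t 0 = 0 ∧ t 6 = 0 ∧ t 2 = t 5 ^ 2) := by
  simp only [g12Poly, map_sub, map_mul, map_pow, eval_X]
  constructor
  · rintro ⟨h0, hd⟩
    have ha := hd 0
    have h2 := hd 2
    have h6 := hd 6
    simp [pderiv_X, Pi.single_apply] at ha h2 h6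
    refine ⟨h2, h6, by linear_combination ha⟩
  · rintro ⟨h0, h6, h2⟩
    refine ⟨by rw [h0, h6]; ring, fun i => ?_⟩
    fin_cases i <;> simp [pderiv_X, Pi.single_apply, h0, h6, h2]
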